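/- Let L ⊆ ℝ^d be a full-rank lattice. Then L admits a covering of ℝ^d by translates of a rotated rectangular box of diameter at most √d · λ_d(L): there exist an orthogonal transformation K ∈ O(d) and positive real numbers a₁, …, a_d with a₁² + ⋯ + a_d² ≤ d · λ_d(L)² such that the translates x + K([0,a₁] × ⋯ × [0,a_d]), for x ranging over L, cover all of ℝ^d. -/

import Mathlib

/-- The Euclidean (`L²`) norm of a vector. -/
noncomputable def euclNorm {ι : Type*} [Fintype ι] (x : ι → ℝ) : ℝ :=
  Real.sqrt (∑ i, x i ^ 2)

/-- The `i`-th successive minimum of a lattice `L ⊆ ℝ^ι`: the least `r > 0` such that `L`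
contains `i` linearly independent vectors of Euclidean norm at most `r`. -/
noncomputable def succMin {ι : Type*} [Fintype ι] (L : Submodule ℤ (ι → ℝ)) (i : ℕ) : ℝ :=
  sInf {r : ℝ | 0 < r ∧ ∃ v : Fin i → (ι → ℝ), (∀ j, v j ∈ L) ∧
    LinearIndependent ℝ v ∧ ∀ j, euclNorm (v j) ≤ r}

/-!
Since a lattice is discrete, `λ_d` is attained by linearly independent lattice vectors
`v₁, …, v_d`. Their Gram–Schmidt orthogonalisation `v₁*, …, v_d*` satisfies
`‖vⱼ*‖ ≤ ‖vⱼ‖ ≤ λ_d`, and the lattice translates of the box with sides `vⱼ*` cover `ℝ^d`: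
in the orthonormal frame `vⱼ* / ‖vⱼ*‖` the `vⱼ` have an upper-triangular coordinate matrix
with diagonal `‖vⱼ*‖`, so every point is moved into the box by subtracting integer multiples
of `v_d, v_{d-1}, …, v₁` in turn (Babai's nearest-plane rounding).
-/

open scoped RealInnerProductSpace
open Matrix Set InnerProductSpace Module

lemma euclNorm_eq_norm_toLp {ι : Type*} [Fintype ι] (x : ι → ℝ) :
    euclNorm x = ‖(WithLp.toLp 2 x : EuclideanSpace ℝ ι)‖ := by
  simp [euclNorm, EuclideanSpace.norm_eq]

lemma Submodule.finite_setOf_mem_euclNorm_le {ι : Type*} [Fintype ι]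
    (L : Submodule ℤ (ι → ℝ)) [DiscreteTopology L] (r : ℝ) :
    {x | x ∈ L ∧ euclNorm x ≤ r}.Finite := by
  have hclosed : IsClosed (L : Set (ι → ℝ)) :=
    AddSubgroup.isClosed_of_discrete (H := L.toAddSubgroup)
  refine (Metric.finite_isBounded_inter_isClosed DiscreteTopology.isDiscrete
    (Metric.isBounded_closedBall (x := 0) (r := r)) hclosed).subset ?_
  rintro x ⟨hxL, hxr⟩
  rw [euclNorm_eq_norm_toLp] at hxr
  refine ⟨mem_closedBall_zero_iff.mpr ((pi_norm_le_iff_of_nonneg ((norm_nonneg _).trans hxr)).mpr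
    fun i => (PiLp.norm_apply_le _ i).trans hxr), hxL⟩

theorem exists_linearIndependent_euclNorm_le_succMin {ι : Type*} [Fintype ι]
    (L : Submodule ℤ (ι → ℝ)) [DiscreteTopology L] {n : ℕ} {v₀ : Fin n → ι → ℝ}
    (hv₀L : ∀ j, v₀ j ∈ L) (hv₀ : LinearIndependent ℝ v₀) :
    ∃ v : Fin n → ι → ℝ, (∀ j, v j ∈ L) ∧ LinearIndependent ℝ v ∧
      ∀ j, euclNorm (v j) ≤ succMin L n := by
  set r₀ := ∑ j, euclNorm (v₀ j) + 1
  have hv₀r₀ : ∀ j, euclNorm (v₀ j) ≤ r₀ := fun j => by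
    have := Finset.single_le_sum (f := fun j => euclNorm (v₀ j))
      (fun j _ => Real.sqrt_nonneg _) (Finset.mem_univ j)
    linarith
  have hr₀ : 0 < r₀ :=
    add_pos_of_nonneg_of_pos (Finset.sum_nonneg fun j _ => Real.sqrt_nonneg _) one_pos
  set T := {v : Fin n → ι → ℝ | (∀ j, v j ∈ {x | x ∈ L ∧ euclNorm x ≤ r₀}) ∧
    LinearIndependent ℝ v}
  have hT : T.Finite :=
    (Set.Finite.pi' fun _ => L.finite_setOf_mem_euclNorm_le r₀).subset fun v hv => hv.1
  have hv₀T : v₀ ∈ T := ⟨fun j => ⟨hv₀L j, hv₀r₀ j⟩, hv₀⟩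
  obtain ⟨v, ⟨hvT, hv⟩, hmin⟩ :=
    Set.exists_min_image T (fun v => ⨆ j, euclNorm (v j)) hT ⟨v₀, hv₀T⟩
  refine ⟨v, fun j => (hvT j).1, hv, fun j => le_csInf ⟨r₀, hr₀, v₀, hv₀L, hv₀, hv₀r₀⟩ ?_⟩
  rintro r ⟨hr, w, hwL, hw, hwr⟩
  have hvj : euclNorm (v j) ≤ ⨆ j, euclNorm (v j) := le_ciSup (f := fun j => euclNorm (v j))
    (Set.finite_range _).bddAbove j
  rcases le_or_gt r r₀ with hrr₀ | hr₀r
  · exact hvj.trans ((hmin w ⟨fun j => ⟨hwL j, (hwr j).trans hrr₀⟩, hw⟩).trans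
      (Real.iSup_le hwr hr.le))
  · exact hvj.trans ((hmin v₀ hv₀T).trans ((Real.iSup_le hv₀r₀ hr₀.le).trans hr₀r.le))

theorem Matrix.IsUpperTriangular.exists_sub_mulVec_mem_Ico {d : ℕ}
    {T : Matrix (Fin d) (Fin d) ℝ} (hT : T.IsUpperTriangular) (hdiag : ∀ i, 0 < T i i)
    (s : Fin d → ℝ) : ∃ k : Fin d → ℤ, ∀ i, (s - T *ᵥ fun j => (k j : ℝ)) i ∈ Ico 0 (T i i) := by
  induction d with
  | zero => exact ⟨0, fun i => i.elim0⟩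
  | succ d ih =>
    obtain ⟨k, hk⟩ := ih (T := T.submatrix Fin.succ Fin.succ)
      (fun i j hij => hT (Fin.succ_lt_succ_iff.mpr hij)) (fun i => hdiag i.succ) (Fin.tail s)
    set r := s 0 - ∑ j, T 0 j.succ * k j
    refine ⟨Fin.cons ⌊r / T 0 0⌋ k, Fin.cases ?_ fun i => ?_⟩
    · have hrow : (s - T *ᵥ fun j => ((Fin.cons ⌊r / T 0 0⌋ k : Fin (d + 1) → ℤ) j : ℝ)) 0 =
          r - ⌊r / T 0 0⌋ * T 0 0 := by
        simp [r, mulVec, dotProduct, Fin.sum_univ_succ]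
        ring
      rw [hrow]
      exact ⟨Int.sub_floor_div_mul_nonneg r (hdiag 0), Int.sub_floor_div_mul_lt r (hdiag 0)⟩
    · have hrow : (s - T *ᵥ fun j => ((Fin.cons ⌊r / T 0 0⌋ k : Fin (d + 1) → ℤ) j : ℝ)) i.succ =
          (Fin.tail s - T.submatrix Fin.succ Fin.succ *ᵥ fun j => (k j : ℝ)) i := by
        have h0 : T i.succ 0 = 0 := hT (Fin.succ_pos i)
        simp [mulVec, dotProduct, Fin.sum_univ_succ, h0, Fin.tail]
      rw [hrow]
      exact hk i

section GramSchmidt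

variable {E : Type*} [NormedAddCommGroup E] [InnerProductSpace ℝ E]
  {ι : Type*} [LinearOrder ι] [LocallyFiniteOrderBot ι] [WellFoundedLT ι]

lemma inner_gramSchmidt_self_eq_norm_sq (f : ι → E) (n : ι) :
    ⟪gramSchmidt ℝ f n, f n⟫ = ‖gramSchmidt ℝ f n‖ ^ 2 := by
  conv_lhs => rw [gramSchmidt_def'' ℝ f n]
  rw [inner_add_right, real_inner_self_eq_norm_sq, inner_sum, Finset.sum_eq_zero, add_zero]
  intro i hi
  rw [real_inner_smul_right, gramSchmidt_orthogonal ℝ f (Finset.mem_Iio.mp hi).ne', mul_zero]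

lemma norm_gramSchmidt_le (f : ι → E) (n : ι) : ‖gramSchmidt ℝ f n‖ ≤ ‖f n‖ := by
  have hcs := real_inner_le_norm (gramSchmidt ℝ f n) (f n)
  rw [inner_gramSchmidt_self_eq_norm_sq, sq] at hcs
  rcases (norm_nonneg (gramSchmidt ℝ f n)).eq_or_lt with h0 | hpos
  · exact h0 ▸ norm_nonneg _
  · exact le_of_mul_le_mul_left hcs hpos

variable [Fintype ι] [FiniteDimensional ℝ E] (h : finrank ℝ E = Fintype.card ι)
  {f : ι → E}

lemma inner_gramSchmidtOrthonormalBasis_self_eq_norm (hf : LinearIndependent ℝ f) (i : ι) :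
    ⟪gramSchmidtOrthonormalBasis h f i, f i⟫ = ‖gramSchmidt ℝ f i‖ := by
  rw [gramSchmidtOrthonormalBasis_apply h ((gramSchmidtNormed_linearIndependent hf).ne_zero i),
    gramSchmidtNormed, real_inner_smul_left, inner_gramSchmidt_self_eq_norm_sq]
  simp [field]

end GramSchmidt

theorem exists_gramSchmidtOrthonormalBasis_repr_sub_zsmul_mem_Ico {E : Type*}
    [NormedAddCommGroup E] [InnerProductSpace ℝ E] [FiniteDimensional ℝ E] {d : ℕ}
    (h : finrank ℝ E = Fintype.card (Fin d))
    {f : Fin d → E} (hf : LinearIndependent ℝ f) (z : E) :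
    ∃ k : Fin d → ℤ, ∀ j, (gramSchmidtOrthonormalBasis h f).repr (z - ∑ i, k i • f i) j ∈
      Ico 0 ‖gramSchmidt ℝ f j‖ := by
  set e := gramSchmidtOrthonormalBasis h f
  have hdiag : ∀ j, e.toBasis.toMatrix f j j = ‖gramSchmidt ℝ f j‖ := fun j => by
    rw [Basis.toMatrix_apply, OrthonormalBasis.coe_toBasis_repr_apply, e.repr_apply_apply,
      inner_gramSchmidtOrthonormalBasis_self_eq_norm h hf]
  obtain ⟨k, hk⟩ :=
    (gramSchmidtOrthonormalBasis_inv_isUpperTriangular h f).exists_sub_mulVec_mem_Ico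
      (fun j => hdiag j ▸ norm_pos_iff.mpr (gramSchmidt_ne_zero j hf)) (e.repr z)
  refine ⟨k, fun j => ?_⟩
  have hrepr : e.repr (z - ∑ i, k i • f i) j =
      (e.repr z - e.toBasis.toMatrix f *ᵥ fun i => (k i : ℝ)) j := by
    simp [mulVec, dotProduct, Basis.toMatrix_apply, mul_comm]
  rw [hrepr, ← hdiag]
  exact hk j

lemma EuclideanSpace.transpose_basisFun_toMatrix_mul_self {ι : Type*} [Fintype ι]
    [DecidableEq ι]    (e : OrthonormalBasis ι ℝ (EuclideanSpace ℝ ι)) :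
    ((EuclideanSpace.basisFun ι ℝ).toBasis.toMatrix e)ᵀ *
      (EuclideanSpace.basisFun ι ℝ).toBasis.toMatrix e = 1 := by
  have := (EuclideanSpace.basisFun ι ℝ).toMatrix_orthonormalBasis_mem_unitary e
  rwa [mem_unitaryGroup_iff', star_eq_conjTranspose, conjTranspose_eq_transpose_of_trivial] at this

lemma EuclideanSpace.basisFun_toMatrix_mulVec_repr {ι : Type*} [Fintype ι] [DecidableEq ι]
    (e : OrthonormalBasis ι ℝ (EuclideanSpace ℝ ι)) (w : EuclideanSpace ℝ ι) :
    (EuclideanSpace.basisFun ι ℝ).toBasis.toMatrix e *ᵥ e.repr w = w.ofLp := by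
  have := e.toBasis.toMatrix_mulVec_repr (EuclideanSpace.basisFun ι ℝ).toBasis w
  have hrepr : ⇑(e.toBasis.repr w) = (e.repr w).ofLp :=
    funext (e.coe_toBasis_repr_apply w)
  rw [← hrepr, ← e.coe_toBasis, this]
  rfl

/-- **Lemma 2.3.** Every full-rank lattice `L ⊆ ℝ^d` admits a covering of `ℝ^d` by its
translates of a rotated rectangular box of diameter at most `√d · λ_d(L)`: there are an
orthogonal matrix `K` and positive reals `a₁, …, a_d` with `a₁² + ⋯ + a_d² ≤ d λ_d(L)²` such
that the sets `x + K([0,a₁] × ⋯ × [0,a_d])`, `x ∈ L`, cover `ℝ^d`. -/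
theorem lattice_box_covering (d : ℕ) (b : Fin d → (Fin d → ℝ)) (hb : LinearIndependent ℝ b)
    (L : Submodule ℤ (Fin d → ℝ)) (hL : L = Submodule.span ℤ (Set.range b)) :
    ∃ K : Matrix (Fin d) (Fin d) ℝ, K.transpose * K = 1 ∧
      ∃ a : Fin d → ℝ, (∀ i, 0 < a i) ∧ (∑ i, a i ^ 2) ≤ d * succMin L d ^ 2 ∧
        ∀ z : Fin d → ℝ, ∃ x ∈ L, ∃ y : Fin d → ℝ,
          (∀ i, y i ∈ Set.Icc (0 : ℝ) (a i)) ∧ z = x + K.mulVec y := by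
  have hcard : Fintype.card (Fin d) = finrank ℝ (Fin d → ℝ) := by simp
  have : DiscreteTopology L := by
    rw [hL, ← coe_basisOfLinearIndependentOfCardEqFinrank' b hb hcard]
    infer_instance
  obtain ⟨v, hvL, hv, hvmin⟩ := exists_linearIndependent_euclNorm_le_succMin L
    (fun j => hL ▸ Submodule.subset_span ⟨j, rfl⟩) hb
  set f : Fin d → EuclideanSpace ℝ (Fin d) := fun j => WithLp.toLp 2 (v j)
  have hf : LinearIndependent ℝ f :=
    hv.map' (WithLp.linearEquiv 2 ℝ (Fin d → ℝ)).symm.toLinearMap (LinearEquiv.ker _)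
  have h : finrank ℝ (EuclideanSpace ℝ (Fin d)) = Fintype.card (Fin d) := by simp
  set e := gramSchmidtOrthonormalBasis h f
  refine ⟨(EuclideanSpace.basisFun (Fin d) ℝ).toBasis.toMatrix e,
    EuclideanSpace.transpose_basisFun_toMatrix_mul_self e, fun j => ‖gramSchmidt ℝ f j‖,
    fun j => norm_pos_iff.mpr (gramSchmidt_ne_zero j hf), ?_, fun z => ?_⟩
  · calc ∑ j, ‖gramSchmidt ℝ f j‖ ^ 2 ≤ ∑ _j : Fin d, succMin L d ^ 2 :=
          Finset.sum_le_sum fun j _ => pow_le_pow_left₀ (norm_nonneg _)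
            ((norm_gramSchmidt_le f j).trans (euclNorm_eq_norm_toLp (v j) ▸ hvmin j)) 2
      _ = d * succMin L d ^ 2 := by simp
  · obtain ⟨k, hk⟩ :=
      exists_gramSchmidtOrthonormalBasis_repr_sub_zsmul_mem_Ico h hf (WithLp.toLp 2 z)
    refine ⟨∑ i, k i • v i, Submodule.sum_mem _ fun i _ => L.smul_mem (k i) (hvL i), _,
      fun j => Ico_subset_Icc_self (hk j), ?_⟩
    rw [EuclideanSpace.basisFun_toMatrix_mulVec_repr]
    simp [f]
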